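/- Let g = 2k+1 and f_h(x) = Σ_{i=0}^{g+1} a_{2i} x^i palindromic of degree g+1 = 2k+2 over K. Then the substitution (x,y) ↦ ((x+1)/(x-1), y/(x-1)^{k+2}) transforms the equation y² = x f_h(x) into y² = ℓ(x), where ℓ(x) = (x²-1)·Σ_{i} a_{2g+2-2i}(x+1)^{g+1-i}(x-1)^{i}; that is, if Y² = X f_h(X) with X = (x+1)/(x-1) and Y = y/(x-1)^{k+2}, x ≠ 1, then y² = ℓ(x). -/
import Mathlib


/-- For `g = 2k+1` and `f_h(x) = Σ_{i=0}^{g+1} a_{2i} x^i` palindromic of degree `g+1`,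
the substitution `(x,y) ↦ ((x+1)/(x-1), y/(x-1)^{k+2})` transforms `y² = x f_h(x)` into
`y² = ℓ(x)` where `ℓ(x) = (x²-1)·Σ_i a_{2g+2-2i}(x+1)^{g+1-i}(x-1)^i`. -/
theorem stmt_9 (K : Type*) [Field K] [CharZero K] (k : ℕ) (a : ℕ → K) (g : ℕ)
    (hgk : g = 2 * k + 1)
    (hpal : ∀ i ≤ g + 1, a (2 * i) = a (2 * g + 2 - 2 * i)) :
    ∀ x y : K, x ≠ 1 →
      (y / (x - 1) ^ (k + 2)) ^ 2
        = ((x + 1) / (x - 1)) *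
            ∑ i ∈ Finset.range (g + 2), a (2 * i) * ((x + 1) / (x - 1)) ^ i →
      y ^ 2 = (x ^ 2 - 1) * ∑ i ∈ Finset.range (g + 2),
          a (2 * g + 2 - 2 * i) * (x + 1) ^ (g + 1 - i) * (x - 1) ^ i := by
  intro x y hx h
  have hd : x - 1 ≠ 0 := sub_ne_zero.mpr hx
  have hy : y ^ 2 = (y / (x - 1) ^ (k + 2)) ^ 2 * ((x - 1) ^ (k + 2)) ^ 2 := by
    field_simp
  rw [hy, h, ← Finset.sum_range_reflect
    (fun i => a (2 * g + 2 - 2 * i) * (x + 1) ^ (g + 1 - i) * (x - 1) ^ i)]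
  rw [mul_assoc, Finset.mul_sum, Finset.sum_mul, Finset.mul_sum]
  refine Finset.sum_congr rfl fun i hi => ?_
  have hi' : i ≤ g + 1 := Nat.lt_succ_iff.mp (Finset.mem_range.mp hi)
  have e1 : g + 2 - 1 - i = g + 1 - i := by omega
  have e2 : 2 * g + 2 - 2 * (g + 1 - i) = 2 * i := by omega
  have e3 : g + 1 - (g + 1 - i) = i := by omega
  rw [e1, e2, e3, div_pow]
  have hpow : (x - 1) ^ (g + 1 - i) * (x - 1) ^ i = (x - 1) ^ (g + 1) :=
    pow_sub_mul_pow (x - 1) hi'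
  have h22 : ((x - 1) ^ (k + 2)) ^ 2 = (x - 1) ^ (g + 1) * (x - 1) * (x - 1) := by
    rw [← pow_succ, ← pow_succ, ← pow_mul]
    congr 1
    omega
  field_simp
  rw [h22]
  have : ((x - 1) ^ (g + 1 - i)) = (x - 1) ^ (g + 1) / (x - 1) ^ i := by
    field_simp
    rw [hpow]
  rw [this]
  field_simp
  ring
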